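/- Let $(a_n)_{n \in \mathbb{Z}}$ be complex numbers with $\sum_{n=-\infty}^{\infty} |a_n| < \infty$, and suppose the function $f(z) = \sum_{n \in \mathbb{Z}} a_n z^n$ on $\mathbb{T}$ is Hölder continuous with some exponent $\alpha \in (0,1]$. Then for each $z \in \mathbb{T}$, the function $w \mapsto \frac{w(f(w)-f(z))}{z-w}$ is integrable on $\mathbb{T}$ with respect to normalized Lebesgue measure $\mu$, and $\int_{\mathbb{T}} \frac{w(f(w)-f(z))}{z-w}\,\mu(dw) = \sum_{n=-\infty}^{-1} a_n z^n$. -/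

import Mathlib

open MeasureTheory Set

/-- The normalized Lebesgue (Haar) measure on the unit circle, as a measure on `ℂ`. -/
noncomputable def circleMeasure : Measure ℂ :=
  (ENNReal.ofReal (2 * Real.pi))⁻¹ •
    Measure.map (fun t : ℝ => Complex.exp (t * Complex.I))
      (volume.restrict (Ioc 0 (2 * Real.pi)))

/-!
Put `g w = w (f w - f z) / (z - w)` and `c N = ∫ g w · w⁻ᴺ dμ`. The Hölder bound gives
`‖g w‖ ≤ C ‖z - w‖ ^ (α - 1)`, integrable on the circle because `α - 1 > -1`. Since
`g w · (z - w) = w (f w - f z)`, the coefficients satisfy `z c (N + 1) - c N = a N - [N = 0] f z`,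
and `c N → 0` by the Riemann–Lebesgue lemma. Summing the recurrence against `z ^ N` (`‖z‖ = 1`)
telescopes to `c 0 = f z - ∑_{n ≥ 0} a n z ^ n`, the principal part of the Laurent series at `z`.
-/

open Complex Filter Topology FourierTransform
open scoped Real

section MapRestrict

variable {α β E : Type*} [TopologicalSpace α] [MeasurableSpace α] [BorelSpace α]
  [TopologicalSpace β] [MeasurableSpace β] [BorelSpace β] [NormedAddCommGroup E]
  {μ : Measure α} {s : Set α} {e : α → β}

theorem map_restrict_eq_map_domRestrict (hs : MeasurableSet s) (he : ContinuousOn e s) :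
    (μ.restrict s).map e = (μ.comap Subtype.val).map (s.domRestrict e) := by
  rw [← map_comap_subtype_coe hs, AEMeasurable.map_map_of_aemeasurable _
    measurable_subtype_coe.aemeasurable]
  · rfl
  · rw [map_comap_subtype_coe hs]; exact he.aemeasurable hs

variable [PolishSpace α] [T2Space β]

-- Unlike `integral_map`, this needs no measurability of `g`.
theorem integral_map_restrict_of_injOn [NormedSpace ℝ E] (hs : MeasurableSet s)
    (he : ContinuousOn e s) (he' : InjOn e s) (g : β → E) :
    ∫ y, g y ∂(μ.restrict s).map e = ∫ x in s, g (e x) ∂μ := by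
  rw [map_restrict_eq_map_domRestrict hs he, (he.measurableEmbedding hs he').integral_map,
    ← map_comap_subtype_coe hs, (MeasurableEmbedding.subtype_coe hs).integral_map]
  rfl

theorem integrable_map_restrict_iff_of_injOn (hs : MeasurableSet s) (he : ContinuousOn e s)
    (he' : InjOn e s) {g : β → E} :
    Integrable g ((μ.restrict s).map e) ↔ IntegrableOn (g ∘ e) s μ := by
  rw [map_restrict_eq_map_domRestrict hs he, (he.measurableEmbedding hs he').integrable_map_iff,
    IntegrableOn, ← map_comap_subtype_coe hs,
    (MeasurableEmbedding.subtype_coe hs).integrable_map_iff]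
  rfl

end MapRestrict

section CircleMeasure

variable {E : Type*} [NormedAddCommGroup E]

theorem injOn_exp_mul_I_Ioc : InjOn (fun t : ℝ => cexp (t * I)) (Ioc 0 (2 * π)) :=
  fun s hs t ht h => Circle.exp_injOn_Ioc (by simp) hs ht (Subtype.ext (by simpa using h))

theorem integral_circleMeasure [NormedSpace ℝ E] (h : ℂ → E) :
    ∫ w, h w ∂circleMeasure = (2 * π)⁻¹ • ∫ t in Ioc 0 (2 * π), h (cexp (t * I)) := by
  rw [circleMeasure, integral_smul_measure, integral_map_restrict_of_injOn measurableSet_Ioc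
    (by fun_prop) injOn_exp_mul_I_Ioc, ENNReal.toReal_inv, ENNReal.toReal_ofReal (by positivity)]

theorem integrable_circleMeasure_iff {h : ℂ → E} :
    Integrable h circleMeasure ↔ IntegrableOn (fun t : ℝ => h (cexp (t * I))) (Ioc 0 (2 * π)) := by
  rw [circleMeasure, integrable_smul_measure (ENNReal.inv_ne_zero.2 ENNReal.ofReal_ne_top)
    (ENNReal.inv_ne_top.2 (ENNReal.ofReal_pos.2 (by positivity)).ne'),
    integrable_map_restrict_iff_of_injOn measurableSet_Ioc (by fun_prop) injOn_exp_mul_I_Ioc]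
  rfl

theorem ae_mem_sphere_circleMeasure : ∀ᵐ w ∂circleMeasure, w ∈ Metric.sphere (0 : ℂ) 1 := by
  refine Measure.ae_smul_measure
    ((ae_map_iff (by fun_prop) Metric.isClosed_sphere.measurableSet).2 (ae_of_all _ ?_)) _
  simp

instance : IsProbabilityMeasure circleMeasure := by
  constructor
  rw [circleMeasure, Measure.smul_apply, Measure.map_apply (by fun_prop) MeasurableSet.univ,
    preimage_univ, Measure.restrict_apply_univ, Real.volume_Ioc, sub_zero, smul_eq_mul,
    ENNReal.inv_mul_cancel (ENNReal.ofReal_pos.2 (by positivity)).ne' ENNReal.ofReal_ne_top]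

theorem ContinuousOn.integrable_circleMeasure {h : ℂ → E}
    (hh : ContinuousOn h (Metric.sphere 0 1)) : Integrable h circleMeasure :=
  integrable_circleMeasure_iff.2
    (hh.comp_continuous (by fun_prop) fun t => by simp).integrableOn_Ioc

end CircleMeasure

theorem integral_exp_int_mul_Ioc (n : ℤ) :
    ∫ t in Ioc 0 (2 * π), cexp (n * (t * I)) = if n = 0 then ((2 * π : ℝ) : ℂ) else 0 := by
  rw [← intervalIntegral.integral_of_le (by positivity)]
  split_ifs with hn
  · simp [hn]
  have hnI : (n : ℂ) * I ≠ 0 := mul_ne_zero (Int.cast_ne_zero.2 hn) I_ne_zero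
  simp_rw [← mul_assoc, mul_right_comm _ _ I]
  rw [integral_exp_mul_complex hnI, div_eq_zero_iff, sub_eq_zero]
  left
  rw [ofReal_zero, mul_zero, exp_zero, ← exp_int_mul_two_pi_mul_I n]
  congr 1
  push_cast
  ring

theorem integral_zpow_circleMeasure (n : ℤ) :
    ∫ w, w ^ n ∂circleMeasure = if n = 0 then 1 else 0 := by
  rw [integral_circleMeasure]
  simp_rw [← exp_int_mul, integral_exp_int_mul_Ioc]
  split_ifs
  · rw [real_smul, ← ofReal_mul, inv_mul_cancel₀ (by positivity), ofReal_one]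
  · rw [smul_zero]

theorem tendsto_integral_mul_zpow_neg_circleMeasure (h : ℂ → ℂ) :
    Tendsto (fun N : ℕ => ∫ w, h w * w ^ (-(N : ℤ)) ∂circleMeasure) atTop (𝓝 0) := by
  set H : ℝ → ℂ := (Ioc 0 (2 * π)).indicator fun t => h (cexp (t * I))
  have hfourier (N : ℕ) : ∫ w, h w * w ^ (-(N : ℤ)) ∂circleMeasure =
      (2 * π)⁻¹ • 𝓕 H (N / (2 * π)) := by
    rw [integral_circleMeasure, Real.fourier_real_eq_integral_exp_smul,
      ← integral_indicator measurableSet_Ioc]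
    congr 1
    refine integral_congr_ae (ae_of_all _ fun t => ?_)
    simp only [H, indicator, smul_eq_mul]
    split_ifs
    · rw [← exp_int_mul, mul_comm]
      congr 2
      push_cast
      field_simp
    · simp
  simp_rw [hfourier]
  have hξ : Tendsto (fun N : ℕ => (N : ℝ) / (2 * π)) atTop (cocompact ℝ) :=
    (tendsto_natCast_atTop_atTop.atTop_div_const (by positivity)).mono_right
      (by rw [cocompact_eq_atBot_atTop]; exact le_sup_right)
  simpa using ((Real.zero_at_infty_fourier H).comp hξ).const_smul (2 * π)⁻¹

theorem integral_tsum_mul_zpow_mul_zpow_neg_circleMeasure {a : ℤ → ℂ} (ha : Summable fun n => ‖a n‖)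
    (N : ℤ) : ∫ w, (∑' n, a n * w ^ n) * w ^ (-N) ∂circleMeasure = a N := by
  have hsphere := ae_mem_sphere_circleMeasure
  have hne : Metric.sphere (0 : ℂ) 1 ⊆ {0}ᶜ := fun w hw => ne_zero_of_mem_unit_sphere ⟨w, hw⟩
  have hcont (m : ℤ) : ContinuousOn (fun w : ℂ => w ^ m) (Metric.sphere 0 1) :=
    (continuousOn_zpow₀ m).mono hne
  have hterm (n : ℤ) : ∫ w, a n * w ^ n * w ^ (-N) ∂circleMeasure = if n = N then a n else 0 := by
    rw [integral_congr_ae (hsphere.mono fun w hw => by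
      rw [mul_assoc, ← zpow_add₀ (hne hw), ← sub_eq_add_neg]), integral_const_mul,
      integral_zpow_circleMeasure]
    simp [sub_eq_zero]
  have hnorm (n : ℤ) : ∫ w, ‖a n * w ^ n * w ^ (-N)‖ ∂circleMeasure = ‖a n‖ := by
    rw [integral_congr_ae (hsphere.mono fun w hw => by
      rw [norm_mul, norm_mul, norm_zpow, norm_zpow, mem_sphere_zero_iff_norm.1 hw, one_zpow,
        one_zpow, mul_one, mul_one]), integral_const, probReal_univ, one_smul]
  calc ∫ w, (∑' n, a n * w ^ n) * w ^ (-N) ∂circleMeasure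
      = ∫ w, ∑' n, a n * w ^ n * w ^ (-N) ∂circleMeasure := by simp_rw [tsum_mul_right]
    _ = ∑' n, ∫ w, a n * w ^ n * w ^ (-N) ∂circleMeasure :=
      (integral_tsum_of_summable_integral_norm (F := fun n w => a n * w ^ n * w ^ (-N))
        (fun n => (continuousOn_const.mul (hcont n)).mul (hcont _) |>.integrable_circleMeasure)
        (ha.congr fun n => (hnorm n).symm)).symm
    _ = a N := by simp_rw [hterm]; exact tsum_ite_eq N a

theorem mul_abs_le_norm_exp_mul_I_sub_one {x : ℝ} (hx : |x| ≤ π) :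
    2 / π * |x| ≤ ‖cexp (x * I) - 1‖ := by
  have h := Real.mul_abs_le_abs_sin (x := x / 2) (by rw [abs_div, abs_two]; linarith)
  rw [mul_comm (x : ℂ), norm_exp_I_mul_ofReal_sub_one, norm_mul, Real.norm_eq_abs, Real.norm_eq_abs,
    abs_two]
  rw [abs_div, abs_two] at h
  linarith

theorem intervalIntegrable_abs_sub_rpow {r : ℝ} (hr : -1 < r) (c a b : ℝ) :
    IntervalIntegrable (fun x => |x - c| ^ r) volume a b := by
  have hpos (d : ℝ) (hd : 0 ≤ d) : IntervalIntegrable (fun x => |x| ^ r) volume 0 d :=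
    (intervalIntegral.intervalIntegrable_rpow' hr).congr_ae <| by
      rw [uIoc_of_le hd]
      exact (ae_restrict_mem measurableSet_Ioc).mono fun x hx => by simp only [abs_of_pos hx.1]
  have hzero (d : ℝ) : IntervalIntegrable (fun x => |x| ^ r) volume 0 d := by
    rcases le_total 0 d with hd | hd
    · exact hpos d hd
    · simpa using (hpos (-d) (by linarith)).comp_mul_left (c := -1)
  simpa using ((hzero (a - c)).symm.trans (hzero (b - c))).comp_sub_right c

theorem integrable_norm_sub_rpow_circleMeasure {r : ℝ} (hr : -1 < r) {z : ℂ} (hz : ‖z‖ = 1) :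
    Integrable (fun w => ‖z - w‖ ^ r) circleMeasure := by
  rcases le_or_gt 0 r with hr0 | hr0
  · exact ContinuousOn.integrable_circleMeasure
      ((continuous_const.sub continuous_id).norm.rpow_const fun _ => Or.inr hr0).continuousOn
  set θ := arg z
  have hzθ : cexp (θ * I) = z := by simpa [hz] using norm_mul_exp_arg_mul_I z
  have hbound (t : ℝ) (ht : |t - θ| ≤ π) (htθ : t ≠ θ) :
      ‖z - cexp (t * I)‖ ^ r ≤ (2 / π) ^ r * |t - θ| ^ r := by
    have hchord : ‖z - cexp (t * I)‖ = ‖cexp ((t - θ : ℝ) * I) - 1‖ := by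
      have : z - cexp (t * I) = -z * (cexp ((t - θ : ℝ) * I) - 1) := by
        rw [← hzθ, neg_mul, mul_sub, ← exp_add]
        push_cast
        ring_nf
      rw [this, norm_mul, norm_neg, hz, one_mul]
    rw [← Real.mul_rpow (by positivity) (abs_nonneg _)]
    refine Real.rpow_le_rpow_of_nonpos (by positivity [sub_ne_zero.2 htθ]) ?_ hr0.le
    rw [hchord]
    exact mul_abs_le_norm_exp_mul_I_sub_one ht
  have hperiodic : Function.Periodic (fun t : ℝ => ‖z - cexp (t * I)‖ ^ r) (2 * π) := by
    intro t
    simp only [ofReal_add, ofReal_mul, ofReal_ofNat, add_mul, exp_add, exp_two_pi_mul_I, mul_one]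
  -- Integrate over the period centred at `θ`: there the only singularity is at `θ` itself.
  rw [integrable_circleMeasure_iff, ← intervalIntegrable_iff_integrableOn_Ioc_of_le (by positivity)]
  refine hperiodic.intervalIntegrable (by positivity) (t := θ - π) ?_ _ _
  refine ((intervalIntegrable_abs_sub_rpow hr θ _ _).const_mul ((2 / π) ^ r)).mono_fun'
    (by fun_prop : Measurable fun t : ℝ => ‖z - cexp (t * I)‖ ^ r).aestronglyMeasurable ?_
  rw [uIoc_of_le (by linarith [Real.pi_pos])]
  filter_upwards [ae_restrict_mem measurableSet_Ioc, ae_restrict_of_ae (Measure.ae_ne volume θ)]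
    with t ht htθ
  rw [Real.norm_of_nonneg (by positivity)]
  exact hbound t (abs_le.2 ⟨by linarith [ht.1], by linarith [ht.2]⟩) htθ

theorem continuousOn_of_norm_sub_le_rpow {E F : Type*} [SeminormedAddCommGroup E]
    [SeminormedAddCommGroup F] {f : E → F} {s : Set E} {C α : ℝ} (hα : 0 < α)
    (h : ∀ x ∈ s, ∀ y ∈ s, ‖f x - f y‖ ≤ C * ‖x - y‖ ^ α) : ContinuousOn f s := by
  intro x hx
  rw [ContinuousWithinAt, tendsto_iff_norm_sub_tendsto_zero]
  have hlim : Tendsto (fun y => C * ‖y - x‖ ^ α) (𝓝[s] x) (𝓝 0) := by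
    have : Continuous fun y => C * ‖y - x‖ ^ α := by fun_prop (disch := exact hα.le)
    simpa [Real.zero_rpow hα.ne'] using this.continuousWithinAt.tendsto (s := s) (x := x)
  exact squeeze_zero' (Eventually.of_forall fun _ => norm_nonneg _)
    (eventually_nhdsWithin_of_forall fun y hy => h y hy x hx) hlim

theorem norm_mul_sub_div_sub_le {f : ℂ → ℂ} {z w : ℂ} {C α : ℝ} (hC : 0 ≤ C) (hw : ‖w‖ = 1)
    (hfwz : ‖f w - f z‖ ≤ C * ‖w - z‖ ^ α) :
    ‖w * (f w - f z) / (z - w)‖ ≤ C * ‖z - w‖ ^ (α - 1) := by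
  rcases eq_or_ne z w with rfl | hzw
  · simp only [sub_self, mul_zero, zero_div, norm_zero]
    positivity
  have hpos : 0 < ‖z - w‖ := norm_pos_iff.2 (sub_ne_zero.2 hzw)
  rw [norm_div, norm_mul, hw, one_mul, div_le_iff₀ hpos, mul_assoc,
    ← Real.rpow_add_one hpos.ne', sub_add_cancel, norm_sub_rev z]
  exact hfwz

theorem integrable_mul_sub_div_sub_circleMeasure {f : ℂ → ℂ} {z : ℂ} {C α : ℝ} (hα : 0 < α)
    (hC : 0 ≤ C)
    (hHolder : ∀ z ∈ Metric.sphere (0:ℂ) 1, ∀ w ∈ Metric.sphere (0:ℂ) 1,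
      ‖f z - f w‖ ≤ C * ‖z - w‖ ^ α)
    (hz : z ∈ Metric.sphere (0:ℂ) 1) :
    Integrable (fun w => w * (f w - f z) / (z - w)) circleMeasure := by
  have hfe : Measurable fun t : ℝ => f (cexp (t * I)) :=
    ((continuousOn_of_norm_sub_le_rpow hα hHolder).comp_continuous (by fun_prop)
      fun t => by simp).measurable
  have hbound := (integrable_norm_sub_rpow_circleMeasure (r := α - 1) (by linarith)
    (mem_sphere_zero_iff_norm.1 hz)).const_mul C
  rw [integrable_circleMeasure_iff] at hbound ⊢
  have hexp : Measurable fun t : ℝ => cexp (t * I) := by fun_prop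
  refine hbound.mono' ((hexp.mul (hfe.sub_const _)).div (hexp.const_sub z)).aestronglyMeasurable
    (ae_of_all _ fun t => ?_)
  exact norm_mul_sub_div_sub_le hC (by simp) (hHolder _ (by simp) z hz)

theorem mul_integral_mul_zpow_neg_succ_sub {f : ℂ → ℂ} {z : ℂ}
    (hg : Integrable (fun w => w * (f w - f z) / (z - w)) circleMeasure) (N : ℤ) :
    z * ∫ w, w * (f w - f z) / (z - w) * w ^ (-(N + 1)) ∂circleMeasure
      - ∫ w, w * (f w - f z) / (z - w) * w ^ (-N) ∂circleMeasure
      = ∫ w, (f w - f z) * w ^ (-N) ∂circleMeasure := by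
  have hsphere := ae_mem_sphere_circleMeasure
  have hint (m : ℤ) : Integrable (fun w => w * (f w - f z) / (z - w) * w ^ m) circleMeasure :=
    hg.mul_bdd (c := 1) (by fun_prop) <| hsphere.mono fun w hw => by
      rw [norm_zpow, mem_sphere_zero_iff_norm.1 hw, one_zpow]
  rw [← integral_const_mul, ← integral_sub ((hint _).const_mul z) (hint _)]
  refine integral_congr_ae (hsphere.mono fun w hw => ?_)
  have hw0 : w ≠ 0 := ne_zero_of_mem_unit_sphere ⟨w, hw⟩
  have hcancel : w * (f w - f z) / (z - w) * (z - w) = w * (f w - f z) :=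
    div_mul_cancel_of_imp fun h => by rw [sub_eq_zero.1 h, sub_self, mul_zero]
  calc z * (w * (f w - f z) / (z - w) * w ^ (-(N + 1))) - w * (f w - f z) / (z - w) * w ^ (-N)
      = w * (f w - f z) / (z - w) * (z - w) * w ^ (-(N + 1)) := by
        rw [neg_add, zpow_add₀ hw0, zpow_neg_one]
        field_simp
    _ = (f w - f z) * w ^ (-N) := by
        rw [hcancel, neg_add, zpow_add₀ hw0, zpow_neg_one]
        field_simp

theorem integral_sub_const_mul_zpow_neg {a : ℤ → ℂ} (ha : Summable fun n => ‖a n‖) {f : ℂ → ℂ}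
    (hf : ∀ z ∈ Metric.sphere (0:ℂ) 1, f z = ∑' n : ℤ, a n * z ^ n)
    (hfc : ContinuousOn f (Metric.sphere 0 1)) (c : ℂ) (N : ℤ) :
    ∫ w, (f w - c) * w ^ (-N) ∂circleMeasure = a N - if N = 0 then c else 0 := by
  have hzpow : ContinuousOn (fun w : ℂ => w ^ (-N)) (Metric.sphere 0 1) :=
    (continuousOn_zpow₀ _).mono fun w hw => ne_zero_of_mem_unit_sphere ⟨w, hw⟩
  have hfint : Integrable (fun w => f w * w ^ (-N)) circleMeasure :=
    (hfc.mul hzpow).integrable_circleMeasure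
  have hcint : Integrable (fun w => c * w ^ (-N)) circleMeasure :=
    (continuousOn_const.mul hzpow).integrable_circleMeasure
  simp_rw [sub_mul]
  rw [integral_sub hfint hcint, integral_const_mul,
    integral_zpow_circleMeasure, ← integral_tsum_mul_zpow_mul_zpow_neg_circleMeasure ha N,
    integral_congr_ae (ae_mem_sphere_circleMeasure.mono fun w hw => by rw [hf w hw])]
  simp

theorem hasSum_pow_mul_of_mul_succ_sub {𝕜 : Type*} [NormedField 𝕜] {c b : ℕ → 𝕜} {z : 𝕜}
    (hz : ‖z‖ ≤ 1) (hc : Tendsto c atTop (𝓝 0)) (hb : Summable fun N => z ^ N * b N)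
    (hrec : ∀ N, z * c (N + 1) - c N = b N) : HasSum (fun N => z ^ N * b N) (-c 0) := by
  have hpartial (M : ℕ) : ∑ N ∈ Finset.range M, z ^ N * b N = z ^ M * c M - c 0 := by
    have htel := Finset.sum_range_sub (fun N => z ^ N * c N) M
    rw [pow_zero, one_mul] at htel
    rw [← htel]
    refine Finset.sum_congr rfl fun N _ => ?_
    rw [← hrec]
    ring
  have hvanish : Tendsto (fun M => z ^ M * c M) atTop (𝓝 0) :=
    squeeze_zero_norm (a := fun M => ‖c M‖) (fun M => by
      rw [norm_mul, norm_pow]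
      exact mul_le_of_le_one_left (norm_nonneg _) (pow_le_one₀ (norm_nonneg _) hz))
      (by simpa using hc.norm)
  rw [hb.hasSum_iff_tendsto_nat]
  simp_rw [hpartial]
  simpa using hvanish.sub_const (c 0)

theorem stmt_8_general (a : ℤ → ℂ) (hsum : Summable fun n : ℤ => ‖a n‖)
    (f : ℂ → ℂ) (hf : ∀ z ∈ Metric.sphere (0:ℂ) 1, f z = ∑' n : ℤ, a n * z ^ n)
    (α : ℝ) (hα1 : 0 < α) (C : ℝ) (hC : 0 < C)
    (hHolder : ∀ z ∈ Metric.sphere (0:ℂ) 1, ∀ w ∈ Metric.sphere (0:ℂ) 1,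
      ‖f z - f w‖ ≤ C * ‖z - w‖ ^ α) :
    ∀ z ∈ Metric.sphere (0:ℂ) 1,
      Integrable (fun w : ℂ => w * (f w - f z) / (z - w)) circleMeasure ∧
      ∫ w, w * (f w - f z) / (z - w) ∂circleMeasure
        = ∑' n : ℕ, a (-(n : ℤ) - 1) * z ^ (-(n : ℤ) - 1) := by
  intro z hz
  have hz1 : ‖z‖ = 1 := mem_sphere_zero_iff_norm.1 hz
  have hg := integrable_mul_sub_div_sub_circleMeasure hα1 hC.le hHolder hz
  refine ⟨hg, ?_⟩
  set c : ℕ → ℂ := fun N => ∫ w, w * (f w - f z) / (z - w) * w ^ (-(N : ℤ)) ∂circleMeasure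
  have hrec (N : ℕ) : z * c (N + 1) - c N = a N - if N = 0 then f z else 0 := by
    have := (mul_integral_mul_zpow_neg_succ_sub hg N).trans <|
      integral_sub_const_mul_zpow_neg hsum hf (continuousOn_of_norm_sub_le_rpow hα1 hHolder) (f z) N
    simpa only [c, Nat.cast_add, Nat.cast_one, Nat.cast_eq_zero] using this
  have hlaurent : Summable fun n : ℤ => a n * z ^ n :=
    hsum.of_norm_bounded fun n => by rw [norm_mul, norm_zpow, hz1, one_zpow, mul_one]
  have hnonneg : Summable fun n : ℕ => a n * z ^ (n : ℤ) :=
    hlaurent.comp_injective Nat.cast_injective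
  have hneg : Summable fun n : ℕ => a (-(n + 1)) * z ^ (-(n + 1 : ℤ)) :=
    hlaurent.comp_injective fun m n h => by simpa using h
  have hsplit : HasSum (fun N : ℕ => z ^ N * (a N - if N = 0 then f z else 0))
      (∑' n : ℕ, a n * z ^ (n : ℤ) - f z) := by
    refine (hnonneg.hasSum.sub (hasSum_ite_eq 0 (f z))).congr_fun fun N => ?_
    split_ifs with hN <;> simp [hN, mul_sub, mul_comm]
  have htel : HasSum _ (-c 0) := hasSum_pow_mul_of_mul_succ_sub hz1.le
    (tendsto_integral_mul_zpow_neg_circleMeasure _) hsplit.summable hrec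
  have hfz := (hf z hz).trans (tsum_of_nat_of_neg_add_one hnonneg hneg)
  have hc0 : ∫ w, w * (f w - f z) / (z - w) ∂circleMeasure = c 0 := by simp [c]
  simp_rw [hc0, ← neg_add']
  linear_combination -(htel.unique hsplit) + hfz

theorem stmt_8 (a : ℤ → ℂ) (hsum : Summable fun n : ℤ => ‖a n‖)
    (f : ℂ → ℂ) (hf : ∀ z ∈ Metric.sphere (0:ℂ) 1, f z = ∑' n : ℤ, a n * z ^ n)
    (α : ℝ) (hα1 : 0 < α) (hα2 : α ≤ 1) (C : ℝ) (hC : 0 < C)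
    (hHolder : ∀ z ∈ Metric.sphere (0:ℂ) 1, ∀ w ∈ Metric.sphere (0:ℂ) 1,
      ‖f z - f w‖ ≤ C * ‖z - w‖ ^ α) :
    ∀ z ∈ Metric.sphere (0:ℂ) 1,
      Integrable (fun w : ℂ => w * (f w - f z) / (z - w)) circleMeasure ∧
      ∫ w, w * (f w - f z) / (z - w) ∂circleMeasure
        = ∑' n : ℕ, a (-(n : ℤ) - 1) * z ^ (-(n : ℤ) - 1) :=
  stmt_8_general a hsum f hf α hα1 C hC hHolder
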